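/- (Variation of the integral of a 1-form along a curve.) Let α be a smooth 1-form on ℝ^n and let (ε, t) ↦ γ_ε(t) ∈ ℝ^n be a smooth two-parameter family, t ∈ [0,T], with γ_0 = γ and δγ(t) = ∂_ε|_{ε=0} γ_ε(t). Then d/dε|_{ε=0} ∫_0^T α(γ_ε(t))(γ_ε'(t)) dt = ∫_0^T dα(γ(t))(δγ(t), γ'(t)) dt + α(γ(T))(δγ(T)) − α(γ(0))(δγ(0)). -/

import Mathlib

local notation "E" n => EuclideanSpace ℝ (Fin n)

/-- Variation of the integral of a 1-form along a curve:
`d/dε|₀ ∫₀ᵀ α(γ_ε)(γ_ε') dt = ∫₀ᵀ dα(γ)(δγ, γ') dt + α(γ(T))(δγ(T)) − α(γ(0))(δγ(0))`,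
where `dα(x)(u,w) = D_u(α(·)(w))(x) − D_w(α(·)(u))(x)`. -/
theorem variation_of_one_form_integral (n : ℕ) (T : ℝ) (hT : 0 < T)
    (α : (E n) → ((E n) →L[ℝ] ℝ)) (hα : ContDiff ℝ (⊤ : ℕ∞) α)
    (γ : ℝ → ℝ → (E n)) (hγ : ContDiff ℝ (⊤ : ℕ∞) (fun x : ℝ × ℝ => γ x.1 x.2))
    (δγ : ℝ → (E n)) (hδγ : ∀ t, HasDerivAt (fun ε => γ ε t) (δγ t) 0) :
    HasDerivAt (fun ε => ∫ t in (0:ℝ)..T, α (γ ε t) (deriv (γ ε) t))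
      ((∫ t in (0:ℝ)..T,
          (fderiv ℝ α (γ 0 t) (δγ t)) (deriv (γ 0) t)
            - (fderiv ℝ α (γ 0 t) (deriv (γ 0) t)) (δγ t))
        + α (γ 0 T) (δγ T) - α (γ 0 0) (δγ 0)) 0 := by
  classical
  set Γ : ℝ × ℝ → E n := fun p => γ p.1 p.2 with hΓdef
  have hΓ : ContDiff ℝ (⊤ : ℕ∞) Γ := hγ
  have hΓd : Differentiable ℝ Γ := hΓ.differentiable (by simp)
  -- t-derivative of γ ε
  have hpt : ∀ ε t : ℝ, HasDerivAt (γ ε) (fderiv ℝ Γ (ε, t) (0, 1)) t := fun ε t =>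
    (hΓd (ε, t)).hasFDerivAt.comp_hasDerivAt t ((hasDerivAt_const t ε).prodMk (hasDerivAt_id t))
  -- ε-derivative of γ · t
  have hpe : ∀ t ε0 : ℝ, HasDerivAt (fun ε => γ ε t) (fderiv ℝ Γ (ε0, t) (1, 0)) ε0 := fun t ε0 => by
    have h := (hΓd (ε0, t)).hasFDerivAt.comp_hasDerivAt ε0 ((hasDerivAt_id ε0).prodMk (hasDerivAt_const ε0 t)); exact h
  have hδeq : ∀ t, δγ t = fderiv ℝ Γ (0, t) (1, 0) := fun t => (hδγ t).unique (hpe t 0)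
  set D1 : ℝ × ℝ → E n := fun p => fderiv ℝ Γ p ((1 : ℝ), (0 : ℝ)) with hD1def
  set D2 : ℝ × ℝ → E n := fun p => fderiv ℝ Γ p ((0 : ℝ), (1 : ℝ)) with hD2def
  have hΓ' : ContDiff ℝ (⊤ : ℕ∞) (fderiv ℝ Γ) := hΓ.fderiv_right (by simp)
  have hΓ'd : Differentiable ℝ (fderiv ℝ Γ) := hΓ'.differentiable (by simp)
  have hD1 : ContDiff ℝ (⊤ : ℕ∞) D1 := hΓ'.clm_apply contDiff_const
  have hD2 : ContDiff ℝ (⊤ : ℕ∞) D2 := hΓ'.clm_apply contDiff_const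
  set g : ℝ × ℝ → ℝ := fun p => α (Γ p) (D2 p) with hgdef
  have hg : ContDiff ℝ (⊤ : ℕ∞) g := (hα.comp hΓ).clm_apply hD2
  -- symmetry of second derivatives of Γ
  have hsymm : ∀ p : ℝ × ℝ, ∀ v w : ℝ × ℝ,
      fderiv ℝ (fderiv ℝ Γ) p v w = fderiv ℝ (fderiv ℝ Γ) p w v := fun p =>
    second_derivative_symmetric (fun y => (hΓd y).hasFDerivAt) (hΓ'd p).hasFDerivAt
  -- derivatives of D1, D2
  have hD1has : ∀ p : ℝ × ℝ, HasFDerivAt D1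
      (((fderiv ℝ Γ p).comp 0) + (fderiv ℝ (fderiv ℝ Γ) p).flip ((1 : ℝ), (0 : ℝ))) p :=
    fun p => (hΓ'd p).hasFDerivAt.clm_apply (hasFDerivAt_const _ _)
  have hD2has : ∀ p : ℝ × ℝ, HasFDerivAt D2
      (((fderiv ℝ Γ p).comp 0) + (fderiv ℝ (fderiv ℝ Γ) p).flip ((0 : ℝ), (1 : ℝ))) p :=
    fun p => (hΓ'd p).hasFDerivAt.clm_apply (hasFDerivAt_const _ _)
  set w : ℝ → E n := fun t => fderiv ℝ (fderiv ℝ Γ) (0, t) ((0 : ℝ), (1 : ℝ)) ((1 : ℝ), (0 : ℝ))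
    with hwdef
  -- δγ is the first partial derivative at ε = 0, hence differentiable with derivative w
  have hδγfun : δγ = fun t => D1 (0, t) := funext fun t => hδeq t
  have hδγ' : ∀ t, HasDerivAt δγ (w t) t := by
    intro t
    rw [hδγfun]
    have h1 := (hD1has (0, t)).comp_hasDerivAt t
      ((hasDerivAt_const t (0 : ℝ)).prodMk (hasDerivAt_id t))
    simpa [Function.comp_def, hsymm (0, t) ((1:ℝ),(0:ℝ)) ((0:ℝ),(1:ℝ))] using h1
  -- ε-derivative of g
  set G : ℝ → ℝ → ℝ := fun x t => fderiv ℝ g (x, t) ((1 : ℝ), (0 : ℝ)) with hGdef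
  have hGdiff : ∀ x t : ℝ, HasDerivAt (fun x => g (x, t)) (G x t) x := fun x t => by
    have h := ((hg.differentiable (by simp) (x, t)).hasFDerivAt).comp_hasDerivAt x
      ((hasDerivAt_id x).prodMk (hasDerivAt_const x t)); exact h
  have hGval : ∀ t : ℝ,
      G 0 t = (fderiv ℝ α (γ 0 t) (δγ t)) (D2 (0, t)) + α (γ 0 t) (w t) := by
    intro t
    have hc : HasFDerivAt (fun p => α (Γ p))
        ((fderiv ℝ α (Γ (0, t))).comp (fderiv ℝ Γ (0, t))) (0, t) :=
      ((hα.differentiable (by simp) (Γ (0, t))).hasFDerivAt).comp _ (hΓd (0, t)).hasFDerivAt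
    have hgp : HasFDerivAt g
        ((α (Γ (0, t))).comp
            (((fderiv ℝ Γ (0, t)).comp 0) + (fderiv ℝ (fderiv ℝ Γ) (0, t)).flip ((0:ℝ), (1:ℝ)))
          + ((fderiv ℝ α (Γ (0, t))).comp (fderiv ℝ Γ (0, t))).flip (D2 (0, t))) (0, t) :=
      hc.clm_apply (hD2has (0, t))
    have : G 0 t = fderiv ℝ g ((0 : ℝ), t) ((1 : ℝ), (0 : ℝ)) := rfl
    rw [this, hgp.fderiv]
    have hsy := hsymm (0, t) ((1 : ℝ), (0 : ℝ)) ((0 : ℝ), (1 : ℝ))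
    have hδ : fderiv ℝ Γ ((0 : ℝ), t) ((1 : ℝ), (0 : ℝ)) = δγ t := (hδeq t).symm
    simp only [ContinuousLinearMap.add_apply, ContinuousLinearMap.comp_apply,
      ContinuousLinearMap.flip_apply, ContinuousLinearMap.zero_apply, map_zero, zero_add,
      hsy, hδ]
    rw [add_comm]
  -- continuity facts
  have cγ0 : Continuous (fun t => γ 0 t) :=
    hΓ.continuous.comp (continuous_const.prodMk continuous_id)
  have cδγ : Continuous δγ := by
    rw [hδγfun]
    exact hD1.continuous.comp (continuous_const.prodMk continuous_id)
  have cD2 : Continuous (fun t : ℝ => D2 (0, t)) :=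
    hD2.continuous.comp (continuous_const.prodMk continuous_id)
  have cw : Continuous w := by
    have : Continuous (fun t : ℝ => fderiv ℝ (fderiv ℝ Γ) (0, t)) :=
      (hΓ'.fderiv_right (m := (⊤ : ℕ∞)) (by simp)).continuous.comp (continuous_const.prodMk continuous_id)
    exact ((this.clm_apply continuous_const).clm_apply continuous_const)
  have cfα : Continuous (fun t : ℝ => fderiv ℝ α (γ 0 t)) :=
    (hα.fderiv_right (m := (⊤ : ℕ∞)) (by simp)).continuous.comp cγ0
  have cα : Continuous (fun t : ℝ => α (γ 0 t)) := hα.continuous.comp cγ0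
  have cA : Continuous (fun t : ℝ => (fderiv ℝ α (γ 0 t) (δγ t)) (D2 (0, t))) :=
    (cfα.clm_apply cδγ).clm_apply cD2
  have cB : Continuous (fun t : ℝ => (fderiv ℝ α (γ 0 t) (D2 (0, t))) (δγ t)) :=
    (cfα.clm_apply cD2).clm_apply cδγ
  have cαw : Continuous (fun t : ℝ => α (γ 0 t) (w t)) := cα.clm_apply cw
  -- derivative of h t = α (γ 0 t) (δγ t)
  have hh' : ∀ t : ℝ, HasDerivAt (fun t => α (γ 0 t) (δγ t))
      ((fderiv ℝ α (γ 0 t) (D2 (0, t))) (δγ t) + α (γ 0 t) (w t)) t := by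
    intro t
    have hc : HasDerivAt (fun t => α (γ 0 t)) (fderiv ℝ α (γ 0 t) (D2 (0, t))) t :=
      ((hα.differentiable (by simp) (γ 0 t)).hasFDerivAt).comp_hasDerivAt t (hpt 0 t)
    exact hc.clm_apply (hδγ' t)
  -- a uniform bound for G on the ball of radius 1
  obtain ⟨C, hC⟩ : ∃ C, ∀ p ∈ (Set.Icc (-1 : ℝ) 1 ×ˢ Set.uIcc (0 : ℝ) T),
      ‖fderiv ℝ g p ((1 : ℝ), (0 : ℝ))‖ ≤ C := by
    apply (isCompact_Icc.prod isCompact_uIcc).exists_bound_of_continuousOn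
    exact (((hg.fderiv_right (m := (⊤ : ℕ∞)) (by simp)).continuous).clm_apply continuous_const).continuousOn
  -- differentiate under the integral sign
  have key : HasDerivAt (fun x : ℝ => ∫ t in (0:ℝ)..T, g (x, t))
      (∫ t in (0:ℝ)..T, G 0 t) 0 := by
    have cg : ∀ x : ℝ, Continuous (fun t => g (x, t)) := fun x =>
      hg.continuous.comp (continuous_const.prodMk continuous_id)
    have cG0 : Continuous (G 0) := by
      have : Continuous (fun t : ℝ => fderiv ℝ g (0, t)) :=
        (hg.fderiv_right (m := (⊤ : ℕ∞)) (by simp)).continuous.comp (continuous_const.prodMk continuous_id)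
      exact this.clm_apply continuous_const
    refine (intervalIntegral.hasDerivAt_integral_of_dominated_loc_of_deriv_le
      (F := fun x t => g (x, t)) (F' := G) (bound := fun _ => C) (Metric.ball_mem_nhds 0 one_pos)
      (Filter.Eventually.of_forall fun x => (cg x).aestronglyMeasurable)
      ((cg 0).intervalIntegrable 0 T)
      (cG0.aestronglyMeasurable)
      (Filter.Eventually.of_forall fun t ht x hx => ?_)
      (intervalIntegrable_const)
      (Filter.Eventually.of_forall fun t _ x _ => hGdiff x t)).2
    apply hC
    constructor
    · have : |x| < 1 := by simpa [Metric.mem_ball, Real.dist_eq] using hx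
      exact Set.mem_Icc.2 ⟨by linarith [abs_lt.1 this], le_of_lt (abs_lt.1 this).2⟩
    · exact Set.uIoc_subset_uIcc ht
  -- rewrite the function being differentiated
  have hfun : (fun ε => ∫ t in (0:ℝ)..T, α (γ ε t) (deriv (γ ε) t))
      = fun x : ℝ => ∫ t in (0:ℝ)..T, g (x, t) := by
    funext x
    refine intervalIntegral.integral_congr fun t _ => ?_
    rw [(hpt x t).deriv]
  rw [hfun]
  -- rewrite the value of the derivative
  convert key using 1
  have hsplit : ∀ t : ℝ, G 0 t =
      ((fderiv ℝ α (γ 0 t) (δγ t)) (D2 (0, t)) - (fderiv ℝ α (γ 0 t) (D2 (0, t))) (δγ t))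
        + ((fderiv ℝ α (γ 0 t) (D2 (0, t))) (δγ t) + α (γ 0 t) (w t)) := by
    intro t; rw [hGval t]; ring
  have h1 : (∫ t in (0:ℝ)..T, G 0 t)
      = (∫ t in (0:ℝ)..T,
          ((fderiv ℝ α (γ 0 t) (δγ t)) (D2 (0, t)) - (fderiv ℝ α (γ 0 t) (D2 (0, t))) (δγ t)))
        + ∫ t in (0:ℝ)..T,
            ((fderiv ℝ α (γ 0 t) (D2 (0, t))) (δγ t) + α (γ 0 t) (w t)) := by
    rw [← intervalIntegral.integral_add (f := fun t => (fderiv ℝ α (γ 0 t) (δγ t)) (D2 (0, t)) - (fderiv ℝ α (γ 0 t) (D2 (0, t))) (δγ t))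
      (g := fun t => (fderiv ℝ α (γ 0 t) (D2 (0, t))) (δγ t) + α (γ 0 t) (w t)) ((cA.sub cB).intervalIntegrable 0 T)
      ((cB.add cαw).intervalIntegrable 0 T)]
    exact intervalIntegral.integral_congr fun t _ => hsplit t
  have h2 : (∫ t in (0:ℝ)..T,
        ((fderiv ℝ α (γ 0 t) (D2 (0, t))) (δγ t) + α (γ 0 t) (w t)))
      = α (γ 0 T) (δγ T) - α (γ 0 0) (δγ 0) :=
    intervalIntegral.integral_eq_sub_of_hasDerivAt (fun t _ => hh' t)
      ((cB.add cαw).intervalIntegrable 0 T)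
  rw [h1, h2]
  have h3 : (∫ t in (0:ℝ)..T,
        (fderiv ℝ α (γ 0 t) (δγ t)) (deriv (γ 0) t)
          - (fderiv ℝ α (γ 0 t) (deriv (γ 0) t)) (δγ t))
      = ∫ t in (0:ℝ)..T,
          ((fderiv ℝ α (γ 0 t) (δγ t)) (D2 (0, t)) - (fderiv ℝ α (γ 0 t) (D2 (0, t))) (δγ t)) :=
    intervalIntegral.integral_congr fun t _ => by rw [(hpt 0 t).deriv]
  rw [h3]
  ring
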